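/- Let R be a commutative ring with identity. If a vertex x of the graph Γ(R) lies on some cycle of Γ(R), then x lies on a cycle of length n with 3 ≤ n ≤ 5 in Γ(R). -/

import Mathlib

universe u

/-- The co-maximal graph `Ω(R)`: vertices are the elements of `R`, with distinct `x`, `y`
adjacent iff `Rx + Ry = R`. -/
def comaximalGraph (R : Type*) [CommRing R] : SimpleGraph R where
  Adj x y := x ≠ y ∧ Ideal.span {x} ⊔ Ideal.span {y} = ⊤
  symm := ⟨fun _ _ ⟨h1, h2⟩ => ⟨h1.symm, by rwa [sup_comm]⟩⟩
  loopless := ⟨fun _ ⟨h, _⟩ => h rfl⟩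

/-- Vertices of `Γ(R)`: the elements of `R \ (U(R) ∪ J(R))`. -/
def GammaVert (R : Type*) [CommRing R] : Type _ :=
  {x : R // ¬IsUnit x ∧ x ∉ (⊥ : Ideal R).jacobson}

/-- The graph `Γ(R)` induced on `R \ (U(R) ∪ J(R))`: distinct vertices `x`, `y` are
adjacent iff `Rx + Ry = R`. -/
def Gamma (R : Type*) [CommRing R] : SimpleGraph (GammaVert R) where
  Adj a b := a ≠ b ∧ Ideal.span {a.1} ⊔ Ideal.span {b.1} = ⊤
  symm := ⟨fun _ _ ⟨h1, h2⟩ => ⟨h1.symm, by rwa [sup_comm]⟩⟩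
  loopless := ⟨fun _ ⟨h, _⟩ => h rfl⟩

/-- Vertices of `Γ_r(R)`: the principal ideals `Rx` for `x ∈ R \ (U(R) ∪ J(R))`. -/
def GammaRVert (R : Type*) [CommRing R] : Type _ :=
  {I : Ideal R // ∃ x : R, ¬IsUnit x ∧ x ∉ (⊥ : Ideal R).jacobson ∧ I = Ideal.span {x}}

/-- The graph `Γ_r(R)` on `{Rx | x ∈ R \ (U(R) ∪ J(R))}`: distinct vertices `Rx`, `Ry`
are adjacent iff `Rx + Ry = R`. -/
def GammaR (R : Type*) [CommRing R] : SimpleGraph (GammaRVert R) where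
  Adj I J := I ≠ J ∧ I.1 ⊔ J.1 = ⊤
  symm := ⟨fun _ _ ⟨h1, h2⟩ => ⟨h1.symm, by rwa [sup_comm]⟩⟩
  loopless := ⟨fun _ ⟨h, _⟩ => h rfl⟩

/-- A simple graph is a split graph if its vertex set is the disjoint union of a set
inducing a complete graph and an independent set. -/
def IsSplitGraph {V : Type*} (G : SimpleGraph V) : Prop :=
  ∃ K D : Set V, K ∪ D = Set.univ ∧ K ∩ D = ∅ ∧
    (∀ x ∈ K, ∀ y ∈ K, x ≠ y → G.Adj x y) ∧
    (∀ x ∈ D, ∀ y ∈ D, ¬G.Adj x y)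

/-- A simple graph is bipartite if its vertex set is the disjoint union of two sets
such that every edge goes between them. -/
def IsBipartiteGraph {V : Type*} (G : SimpleGraph V) : Prop :=
  ∃ A B : Set V, A ∪ B = Set.univ ∧ A ∩ B = ∅ ∧
    ∀ x y, G.Adj x y → (x ∈ A ∧ y ∈ B) ∨ (x ∈ B ∧ y ∈ A)

/-- A simple graph is complete bipartite if its vertex set is the disjoint union of two
sets such that two vertices are adjacent iff they lie in different parts. -/
def IsCompleteBipartiteGraph {V : Type*} (G : SimpleGraph V) : Prop :=
  ∃ A B : Set V, A ∪ B = Set.univ ∧ A ∩ B = ∅ ∧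
    ∀ x y, G.Adj x y ↔ ((x ∈ A ∧ y ∈ B) ∨ (x ∈ B ∧ y ∈ A))

/-!
A cycle through `x` of length at least four contains a walk `b - x - a - w` with `x ≠ w` and
`a ≠ b`; this alone forces a triangle or a square through `x`. If `x² ≠ x`, then `x²` is
coprime to both neighbours `a`, `b` of `x`, so `x - a - x² - b - x` is a square. If `x` is
idempotent, put `t = 1 - x + x w`, so that `x t = x w` and `t` is coprime to `x`. When `t` is
a unit, `w ∣ x` makes `w` adjacent to `b`, closing the square `x - a - w - b - x`; otherwise
`t` is a vertex coprime to `x` and to `a`, closing the triangle `x - a - t - x`.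
-/

open SimpleGraph

namespace SimpleGraph

variable {V : Type*} {G : SimpleGraph V} {x a w b : V}

lemma Walk.IsCycle.exists_adj_adj_adj {c : G.Walk x x} (hc : c.IsCycle) (hc4 : 4 ≤ c.length) :
    ∃ a w b, G.Adj x a ∧ G.Adj a w ∧ G.Adj b x ∧ x ≠ w ∧ a ≠ b := by
  have hnil : ¬c.Nil := hc.not_nil
  refine ⟨c.snd, c.getVert 2, c.penultimate, c.adj_snd hnil,
    c.adj_getVert_succ (i := 1) (by omega), c.adj_penultimate hnil, ?_, hc.snd_ne_penultimate⟩
  rw [ne_comm, Ne, hc.getVert_endpoint_iff (by omega)]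
  omega

lemma exists_isCycle_length_eq_three (hxa : G.Adj x a) (haw : G.Adj a w) (hwx : G.Adj w x) :
    ∃ c : G.Walk x x, c.IsCycle ∧ c.length = 3 := by
  refine ⟨.cons hxa (.cons haw (.cons hwx .nil)), ?_, rfl⟩
  have := hxa.ne; have := haw.ne; have := hwx.ne
  simp only [Walk.isCycle_def, Walk.isTrail_def]
  simp [List.nodup_cons]
  tauto

lemma exists_isCycle_length_eq_four (hxa : G.Adj x a) (haw : G.Adj a w) (hwb : G.Adj w b)
    (hbx : G.Adj b x) (hxw : x ≠ w) (hab : a ≠ b) :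
    ∃ c : G.Walk x x, c.IsCycle ∧ c.length = 4 := by
  refine ⟨.cons hxa (.cons haw (.cons hwb (.cons hbx .nil))), ?_, rfl⟩
  have := hxa.ne; have := haw.ne; have := hwb.ne; have := hbx.ne
  simp only [Walk.isCycle_def, Walk.isTrail_def]
  simp [List.nodup_cons]
  tauto

end SimpleGraph

lemma Ideal.notMem_jacobson_bot_of_isCoprime {R : Type*} [CommRing R] {t a : R}
    (h : IsCoprime t a) (ha : ¬IsUnit a) : t ∉ (⊥ : Ideal R).jacobson := by
  obtain ⟨u, v, huv⟩ := h
  intro ht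
  have hva : v * a = t * -u + 1 := by linear_combination huv
  exact ha (isUnit_of_mul_isUnit_right (hva ▸ Ideal.mem_jacobson_bot.mp ht (-u)))

namespace Gamma

variable {R : Type*} [CommRing R] {x a w b : GammaVert R}

lemma adj_iff : (Gamma R).Adj a b ↔ IsCoprime a.1 b.1 := by
  rw [← Ideal.isCoprime_span_singleton_iff, Ideal.isCoprime_iff_sup_eq]
  refine ⟨And.right, fun h => ⟨?_, h⟩⟩
  rintro rfl
  rw [sup_idem, Ideal.span_singleton_eq_top] at h
  exact a.2.1 h

lemma exists_isCycle_length_le_four_of_not_isIdempotentElem (hx : ¬IsIdempotentElem x.1)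
    (hxa : (Gamma R).Adj x a) (hbx : (Gamma R).Adj b x) (hab : a ≠ b) :
    ∃ c : (Gamma R).Walk x x, c.IsCycle ∧ c.length ≤ 4 := by
  have cxa := adj_iff.mp hxa
  have cbx := adj_iff.mp hbx
  let x2 : GammaVert R := ⟨x.1 * x.1, fun h => x.2.1 (isUnit_of_mul_isUnit_left h),
    Ideal.notMem_jacobson_bot_of_isCoprime (cxa.mul_left cxa) a.2.1⟩
  have hxx2 : x ≠ x2 := fun h => hx (congrArg Subtype.val h).symm
  obtain ⟨c, hc, hlen⟩ := exists_isCycle_length_eq_four hxa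
    (adj_iff.mpr (cxa.mul_left cxa).symm) (adj_iff.mpr (cbx.mul_right cbx).symm) hbx hxx2 hab
  exact ⟨c, hc, hlen.le⟩

lemma exists_isCycle_length_le_four_of_isIdempotentElem (hx : IsIdempotentElem x.1)
    (hxa : (Gamma R).Adj x a) (haw : (Gamma R).Adj a w) (hbx : (Gamma R).Adj b x)
    (hxw : x ≠ w) (hab : a ≠ b) :
    ∃ c : (Gamma R).Walk x x, c.IsCycle ∧ c.length ≤ 4 := by
  set t := 1 - x.1 + x.1 * w.1 with ht
  have hxt : x.1 * t = x.1 * w.1 := by linear_combination (w.1 - 1) * hx.eq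
  by_cases htu : IsUnit t
  · have hwx : w.1 ∣ x.1 := (htu.dvd_mul_right).mp (hxt ▸ dvd_mul_left w.1 x.1)
    have hwb : (Gamma R).Adj w b :=
      adj_iff.mpr ((adj_iff.mp hbx).symm.of_isCoprime_of_dvd_left hwx)
    obtain ⟨c, hc, hlen⟩ := exists_isCycle_length_eq_four hxa haw hwb hbx hxw hab
    exact ⟨c, hc, hlen.le⟩
  · have ctx : IsCoprime t x.1 := ⟨1, 1 - w.1, by rw [ht]; ring⟩
    have cat : IsCoprime a.1 t :=
      (hxt ▸ ((adj_iff.mp hxa).symm.mul_right (adj_iff.mp haw))).of_mul_right_right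
    let tv : GammaVert R := ⟨t, htu, Ideal.notMem_jacobson_bot_of_isCoprime ctx x.2.1⟩
    obtain ⟨c, hc, hlen⟩ := exists_isCycle_length_eq_three (w := tv) hxa
      (adj_iff.mpr cat) (adj_iff.mpr ctx)
    exact ⟨c, hc, by omega⟩

end Gamma

/-- Lemma 3.9: if a vertex `x` of `Γ(R)` lies on some cycle, then it lies on a cycle of
length `n` with `3 ≤ n ≤ 5`. -/
theorem gamma_cycle_short {R : Type*} [CommRing R] (x : GammaVert R)
    (h : ∃ c : (Gamma R).Walk x x, c.IsCycle) :
    ∃ c : (Gamma R).Walk x x, c.IsCycle ∧ 3 ≤ c.length ∧ c.length ≤ 5 := by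
  obtain ⟨c, hc⟩ := h
  rcases le_or_gt c.length 5 with hc5 | hc6
  · exact ⟨c, hc, hc.three_le_length, hc5⟩
  obtain ⟨a, w, b, hxa, haw, hbx, hxw, hab⟩ := hc.exists_adj_adj_adj (by omega)
  obtain ⟨c', hc', hlen⟩ : ∃ c' : (Gamma R).Walk x x, c'.IsCycle ∧ c'.length ≤ 4 := by
    by_cases hx : IsIdempotentElem x.1
    · exact Gamma.exists_isCycle_length_le_four_of_isIdempotentElem hx hxa haw hbx hxw hab
    · exact Gamma.exists_isCycle_length_le_four_of_not_isIdempotentElem hx hxa hbx hab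
  exact ⟨c', hc', hc'.three_le_length, by omega⟩
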